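/- Let c > 1, γ > 0 and x > 0 be fixed. There exists a constant C such that for all y ∈ ℝ: c·log|Γ(x + γ + iy)| − log|Γ(x + iy)| ≤ C − (c − 1)·(π/4)·|y|, where Γ denotes the complex Gamma function. -/

import Mathlib

open Complex Real
open scoped Nat ComplexConjugate

/-!
Write `s = σ + iy`. From `Γ(s) Γ(b) = Γ(s + b) B(s, b)` and `|B(s, b)| ≤ B(σ, b)` the ratio
`|Γ(σ + iy)| / Γ(σ)` is nondecreasing in `σ`; combined with
`Γ(s + n) = s (s + 1) ⋯ (s + n - 1) Γ(s)` this bounds `|Γ(σ + a + iy)|` by a polynomial in `|y|`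
times `|Γ(σ + iy)|`, and `|Γ(σ + iy)|` by a polynomial times
`|Γ(1/2 + iy)| = (π / cosh πy)^(1/2) ≤ (2π)^(1/2) e^(-π|y|/2)`. Splitting
`c log|Γ(x+γ+iy)| - log|Γ(x+iy)| = (c - 1) log|Γ(x+γ+iy)| + log|Γ(x+γ+iy) / Γ(x+iy)|`, the first
term is at most `-(c - 1) π|y|/2` up to logarithmic terms, and half of this margin absorbs them.
-/

-- Equality fails only at `x = 0`, where `0 ^ w = 0` while `0 ^ (w.re : ℂ)` can be `1`.
lemma norm_ofReal_cpow_le {x : ℝ} (hx : 0 ≤ x) (w : ℂ) :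
    ‖(x : ℂ) ^ w‖ ≤ ‖(x : ℂ) ^ (w.re : ℂ)‖ := by
  rcases hx.eq_or_lt with rfl | hx
  · by_cases hw : w = 0
    · simp [hw]
    · rw [ofReal_zero, zero_cpow hw, norm_zero]
      exact norm_nonneg _
  · rw [norm_cpow_eq_rpow_re_of_pos hx, norm_cpow_eq_rpow_re_of_pos hx, ofReal_re]

lemma norm_betaIntegral_le {s t : ℂ} (hs : 0 < s.re) (ht : 0 < t.re) :
    ‖betaIntegral s t‖ ≤ ‖betaIntegral s.re t.re‖ := by
  have hsr : 0 < (s.re : ℂ).re := by simpa using hs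
  have htr : 0 < (t.re : ℂ).re := by simpa using ht
  set G : ℝ → ℂ := fun x => (x : ℂ) ^ ((s.re : ℂ) - 1) * (1 - (x : ℂ)) ^ ((t.re : ℂ) - 1)
  have hG_real : ∀ x ∈ Set.uIcc (0 : ℝ) 1, G x = ((‖G x‖ : ℝ) : ℂ) := by
    intro x hx
    rw [Set.uIcc_of_le zero_le_one] at hx
    have hG : G x = ((x ^ (s.re - 1) * (1 - x) ^ (t.re - 1) : ℝ) : ℂ) := by
      simp only [G, ofReal_mul, ofReal_cpow hx.1, ofReal_cpow (sub_nonneg.2 hx.2), ofReal_sub,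
        ofReal_one]
    rw [hG, norm_real, Real.norm_of_nonneg (by have := hx.1; have := hx.2; positivity)]
  calc ‖betaIntegral s t‖
      ≤ ∫ x in (0 : ℝ)..1, ‖(x : ℂ) ^ (s - 1) * (1 - (x : ℂ)) ^ (t - 1)‖ :=
        intervalIntegral.norm_integral_le_integral_norm zero_le_one
    _ ≤ ∫ x in (0 : ℝ)..1, ‖G x‖ := by
        refine intervalIntegral.integral_mono_on zero_le_one (betaIntegral_convergent hs ht).norm
          (betaIntegral_convergent hsr htr).norm fun x hx => ?_
        have h1x : (1 : ℂ) - x = ((1 - x : ℝ) : ℂ) := by push_cast; ring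
        simp only [G, norm_mul, h1x]
        gcongr
        · exact (norm_ofReal_cpow_le hx.1 _).trans_eq (by simp)
        · exact (norm_ofReal_cpow_le (sub_nonneg.2 hx.2) _).trans_eq (by simp)
    _ ≤ ‖betaIntegral s.re t.re‖ := by
        rw [betaIntegral, intervalIntegral.integral_congr hG_real, intervalIntegral.integral_ofReal,
          norm_real]
        exact le_norm_self _

lemma norm_Gamma_ofReal {x : ℝ} (hx : 0 < x) : ‖Gamma (x : ℂ)‖ = Real.Gamma x := by
  rw [Gamma_ofReal, norm_real, Real.norm_of_nonneg (Real.Gamma_pos_of_pos hx).le]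

lemma norm_Gamma_div_Gamma_re_le {s : ℂ} (hs : 0 < s.re) {b : ℝ} (hb : 0 ≤ b) :
    ‖Gamma s‖ / Real.Gamma s.re ≤ ‖Gamma (s + b)‖ / Real.Gamma (s.re + b) := by
  rcases hb.eq_or_lt with rfl | hb
  · simp
  have hb' : 0 < (b : ℂ).re := by simpa using hb
  have hsr : 0 < (s.re : ℂ).re := by simpa using hs
  have hβ := congrArg (‖·‖) (Gamma_mul_Gamma_eq_betaIntegral hs hb')
  have hβr := congrArg (‖·‖) (Gamma_mul_Gamma_eq_betaIntegral hsr hb')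
  simp only [norm_mul, ← ofReal_add, norm_Gamma_ofReal hs, norm_Gamma_ofReal hb,
    norm_Gamma_ofReal (add_pos hs hb)] at hβ hβr
  rw [div_le_div_iff₀ (Real.Gamma_pos_of_pos hs) (Real.Gamma_pos_of_pos (add_pos hs hb))]
  refine le_of_mul_le_mul_right ?_ (Real.Gamma_pos_of_pos hb)
  calc ‖Gamma s‖ * Real.Gamma (s.re + b) * Real.Gamma b
      = ‖Gamma (s + b)‖ * ‖betaIntegral s b‖ * Real.Gamma (s.re + b) := by rw [← hβ]; ring
    _ ≤ ‖Gamma (s + b)‖ * ‖betaIntegral s.re b‖ * Real.Gamma (s.re + b) := by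
        gcongr
        simpa using norm_betaIntegral_le hs hb'
    _ = ‖Gamma (s + b)‖ * Real.Gamma s.re * Real.Gamma b := by
        linear_combination (-‖Gamma (s + b)‖) * hβr

lemma norm_Gamma_add_nat_le {s : ℂ} (hs : 0 < s.re) (n : ℕ) :
    ‖Gamma (s + n)‖ ≤ (‖s‖ + n) ^ n * ‖Gamma s‖ := by
  induction n with
  | zero => simp
  | succ n ih =>
    have hne : s + n ≠ 0 := by
      intro h
      have := congrArg re h
      simp only [add_re, natCast_re, zero_re] at this
      linarith [n.cast_nonneg (α := ℝ)]
    rw [Nat.cast_succ, ← add_assoc, Gamma_add_one _ hne, norm_mul, pow_succ', mul_assoc]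
    calc ‖s + n‖ * ‖Gamma (s + n)‖ ≤ (‖s‖ + n) * ((‖s‖ + n) ^ n * ‖Gamma s‖) := by
          gcongr
          exact (norm_add_le _ _).trans (by simp)
      _ ≤ _ := by gcongr <;> linarith

lemma norm_Gamma_one_half_add_mul_I_sq (y : ℝ) :
    ‖Gamma (1 / 2 + y * I)‖ ^ 2 = π / Real.cosh (π * y) := by
  set z : ℂ := 1 / 2 + y * I
  have hconj : 1 - z = conj z := by apply Complex.ext <;> norm_num [z]
  have hsin : Complex.sin (π * z) = Real.cosh (π * y) := by
    have : (π : ℂ) * z = (π * y : ℝ) * I + π / 2 := by simp only [z]; push_cast; ring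
    rw [this, Complex.sin_add_pi_div_two, Complex.cos_mul_I, Complex.ofReal_cosh]
  have h := Gamma_mul_Gamma_one_sub z
  rw [hconj, Gamma_conj, mul_conj, hsin, normSq_eq_norm_sq] at h
  exact_mod_cast h

lemma norm_Gamma_one_half_add_mul_I_le (y : ℝ) :
    ‖Gamma (1 / 2 + y * I)‖ ≤ √(2 * π) * Real.exp (-(π / 2) * |y|) := by
  have hcosh : Real.exp (π * |y|) / 2 ≤ Real.cosh (π * y) := by
    rw [← Real.cosh_abs, abs_mul, abs_of_pos pi_pos, Real.cosh_eq]
    linarith [Real.exp_pos (-(π * |y|))]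
  rw [← sq_le_sq₀ (norm_nonneg _) (by positivity), norm_Gamma_one_half_add_mul_I_sq, mul_pow,
    Real.sq_sqrt (by positivity), sq, ← Real.exp_add, div_le_iff₀ (Real.cosh_pos _)]
  calc π = 2 * π * Real.exp (-(π / 2) * |y| + -(π / 2) * |y|) * (Real.exp (π * |y|) / 2) := by
        rw [mul_assoc, mul_div_assoc', ← Real.exp_add]; ring_nf; simp
    _ ≤ _ := mul_le_mul_of_nonneg_left hcosh (by positivity)

lemma add_pow_le_mul_exp {A t ε : ℝ} (hA : 0 ≤ A) (ht : 0 ≤ t) (hε : 0 < ε) (n : ℕ) :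
    (A + t) ^ n ≤ n ! / ε ^ n * Real.exp (ε * A) * Real.exp (ε * t) := by
  calc (A + t) ^ n = n ! / ε ^ n * ((ε * (A + t)) ^ n / n !) := by rw [mul_pow]; field_simp
    _ ≤ n ! / ε ^ n * Real.exp (ε * (A + t)) := by
        gcongr
        exact Real.pow_div_factorial_le_exp _ (by positivity) n
    _ = _ := by rw [mul_add, Real.exp_add]; ring

lemma log_le_add_of_le_mul_add_pow {u v K A t ε : ℝ} {n : ℕ} (hu : 0 < u) (hK : 0 < K)
    (hA : 0 ≤ A) (ht : 0 ≤ t) (hε : 0 < ε) (h : u ≤ K * (A + t) ^ n * v) :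
    Real.log u ≤ Real.log (K * (n ! / ε ^ n * Real.exp (ε * A))) + ε * t + Real.log v := by
  have hv : 0 < v := pos_of_mul_pos_right (hu.trans_le h) (by positivity)
  have hbound : u ≤ K * (n ! / ε ^ n * Real.exp (ε * A)) * Real.exp (ε * t) * v := by
    calc u ≤ K * (A + t) ^ n * v := h
      _ ≤ K * (n ! / ε ^ n * Real.exp (ε * A) * Real.exp (ε * t)) * v := by
          gcongr
          exact add_pow_le_mul_exp hA ht hε n
      _ = _ := by ring
  rw [← Real.log_exp (ε * t), ← Real.log_mul (by positivity) (by positivity),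
    ← Real.log_mul (by positivity) hv.ne']
  exact Real.log_le_log hu hbound

lemma norm_Gamma_le_pow_mul_exp {σ : ℝ} (hσ : 0 < σ) {n : ℕ} (hn : σ ≤ 1 / 2 + n) (y : ℝ) :
    ‖Gamma (σ + y * I)‖ ≤ Real.Gamma σ / Real.Gamma (1 / 2 + n) * √(2 * π) *
      (1 / 2 + n + |y|) ^ n * Real.exp (-(π / 2) * |y|) := by
  set w : ℂ := 1 / 2 + y * I
  have hM := norm_Gamma_div_Gamma_re_le (s := σ + y * I) (b := 1 / 2 + n - σ)
    (by simpa using hσ) (by linarith)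
  have hshift : (σ + y * I : ℂ) + ((1 / 2 + n - σ : ℝ) : ℂ) = w + n := by
    simp only [w]; push_cast; ring
  have hre : (σ + y * I : ℂ).re = σ := by simp
  rw [hre, hshift, add_sub_cancel] at hM
  have hnorm : ‖w‖ ≤ 1 / 2 + |y| := (norm_add_le _ _).trans_eq (by simp)
  have hΓσ := Real.Gamma_pos_of_pos hσ
  calc ‖Gamma (σ + y * I)‖ = Real.Gamma σ * (‖Gamma (σ + y * I)‖ / Real.Gamma σ) := by
        field_simp
    _ ≤ Real.Gamma σ * (‖Gamma (w + n)‖ / Real.Gamma (1 / 2 + n)) := by gcongr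
    _ ≤ Real.Gamma σ * ((‖w‖ + n) ^ n * ‖Gamma w‖ / Real.Gamma (1 / 2 + n)) := by
        gcongr
        exact norm_Gamma_add_nat_le (by simp [w]) n
    _ ≤ Real.Gamma σ * ((1 / 2 + |y| + n) ^ n * (√(2 * π) * Real.exp (-(π / 2) * |y|)) /
          Real.Gamma (1 / 2 + n)) := by
        gcongr
        exact norm_Gamma_one_half_add_mul_I_le y
    _ = _ := by ring

lemma norm_Gamma_add_le_pow_mul_norm_Gamma {σ : ℝ} (hσ : 0 < σ) {a : ℝ} (ha : 0 ≤ a) {n : ℕ}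
    (hn : a ≤ n) (y : ℝ) :
    ‖Gamma (σ + a + y * I)‖ ≤ Real.Gamma (σ + a) / Real.Gamma (σ + n) *
      (σ + n + |y|) ^ n * ‖Gamma (σ + y * I)‖ := by
  set s : ℂ := σ + y * I
  have hs : s.re = σ := by simp [s]
  have hM := norm_Gamma_div_Gamma_re_le (s := s + a) (b := n - a) (by simp [s]; linarith)
    (by linarith)
  simp only [add_re, hs, ofReal_re, ofReal_sub, ofReal_natCast, add_add_sub_cancel] at hM
  have hshift : (σ + a + y * I : ℂ) = s + a := by ring
  have hnorm : ‖s‖ ≤ σ + |y| := (norm_add_le _ _).trans_eq (by simp [abs_of_pos hσ])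
  have hΓ : 0 < Real.Gamma (σ + a) := Real.Gamma_pos_of_pos (by linarith)
  calc ‖Gamma (σ + a + y * I)‖ = Real.Gamma (σ + a) * (‖Gamma (s + a)‖ / Real.Gamma (σ + a)) := by
        rw [hshift]; field_simp
    _ ≤ Real.Gamma (σ + a) * (‖Gamma (s + n)‖ / Real.Gamma (σ + n)) := by gcongr
    _ ≤ Real.Gamma (σ + a) * ((‖s‖ + n) ^ n * ‖Gamma s‖ / Real.Gamma (σ + n)) := by
        gcongr
        exact norm_Gamma_add_nat_le (by simpa [hs]) n
    _ ≤ Real.Gamma (σ + a) * ((σ + n + |y|) ^ n * ‖Gamma s‖ / Real.Gamma (σ + n)) := by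
        gcongr _ * (?_ ^ _ * _ / _)
        linarith
    _ = _ := by ring

lemma exists_log_norm_Gamma_le {σ ε : ℝ} (hσ : 0 < σ) (hε : 0 < ε) :
    ∃ C, ∀ y : ℝ, Real.log ‖Gamma (σ + y * I)‖ ≤ C - (π / 2 - ε) * |y| := by
  set n := ⌈σ⌉₊
  have hn : σ ≤ 1 / 2 + n := by linarith [Nat.le_ceil σ]
  have hK : 0 < Real.Gamma σ / Real.Gamma (1 / 2 + n) * √(2 * π) := by
    have := Real.Gamma_pos_of_pos hσ
    positivity
  refine ⟨Real.log (Real.Gamma σ / Real.Gamma (1 / 2 + n) * √(2 * π) *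
    (n ! / ε ^ n * Real.exp (ε * (1 / 2 + n)))), fun y => ?_⟩
  have h := log_le_add_of_le_mul_add_pow (norm_pos_iff.2 (Gamma_ne_zero_of_re_pos (by simpa)))
    hK (by positivity) (abs_nonneg y) hε (norm_Gamma_le_pow_mul_exp hσ hn y)
  rw [Real.log_exp] at h
  linarith

lemma exists_log_norm_Gamma_add_le {σ a ε : ℝ} (hσ : 0 < σ) (ha : 0 ≤ a) (hε : 0 < ε) :
    ∃ C, ∀ y : ℝ,
      Real.log ‖Gamma (σ + a + y * I)‖ ≤ Real.log ‖Gamma (σ + y * I)‖ + C + ε * |y| := by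
  set n := ⌈a⌉₊
  have hK : 0 < Real.Gamma (σ + a) / Real.Gamma (σ + n) := by
    have : 0 < σ + a := by linarith
    positivity
  refine ⟨Real.log (Real.Gamma (σ + a) / Real.Gamma (σ + n) *
    (n ! / ε ^ n * Real.exp (ε * (σ + n)))), fun y => ?_⟩
  have h := log_le_add_of_le_mul_add_pow
    (norm_pos_iff.2 (Gamma_ne_zero_of_re_pos (by simp; linarith))) hK (by positivity)
    (abs_nonneg y) hε (norm_Gamma_add_le_pow_mul_norm_Gamma hσ ha (Nat.le_ceil a) y)
  linarith

/-- For fixed `c > 1`, `γ > 0`, `x > 0`, there is a constant `C` such that for all `y ∈ ℝ`,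
`c·log|Γ(x + γ + iy)| - log|Γ(x + iy)| ≤ C - (c-1)(π/4)|y|`. -/
theorem gamma_modulus_decay_bound (c γ x : ℝ) (hc : 1 < c) (hγ : 0 < γ) (hx : 0 < x) :
    ∃ C : ℝ, ∀ y : ℝ,
      c * Real.log ‖Complex.Gamma (↑x + ↑γ + ↑y * Complex.I)‖
          - Real.log ‖Complex.Gamma (↑x + ↑y * Complex.I)‖
        ≤ C - (c - 1) * (Real.pi / 4) * |y| := by
  obtain ⟨C₁, hdecay⟩ := exists_log_norm_Gamma_le (add_pos hx hγ) (by positivity : 0 < π / 8)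
  obtain ⟨C₂, hratio⟩ := exists_log_norm_Gamma_add_le hx hγ.le
    (mul_pos (sub_pos.2 hc) (by positivity) : 0 < (c - 1) * (π / 8))
  refine ⟨(c - 1) * C₁ + C₂, fun y => ?_⟩
  have hdecay_y := hdecay y
  push_cast at hdecay_y
  linarith [hratio y, mul_le_mul_of_nonneg_left hdecay_y (sub_nonneg.2 hc.le)]
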